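/- arXiv:1401.4236 — 9 statements merged into one kernel-verified Lean document; each statement's English description precedes it below -/
import Mathlib

section
/- For all real numbers P ≥ 0, Q ≥ 0 and Δ ∈ [π/4, π/2], writing s = sin Δ and S = Q·s², there exist ρ ∈ [−1, 1] and Q' ∈ [0, Q] with (2s²Q' + 1 − ρ)(1 + ρ) > 0 such that (1/2)·log₂(1+P) + (1/2)·log₂(1+(√P + s·√Q')²) − (1/4)·log₂((2s²Q' + 1 − ρ)(1 + ρ)) + 2 ≤ R_out(P,Q,Δ) + 1/2. -/
/-!
Take `ρ = 0, Q' = 0` when `S ≤ 1`, and `ρ = 1` otherwise, which turns the last logarithm into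
`log₂ (4 s² Q')`; then take `Q' = Q` when `S < P + 1`, and `Q'` with `s² Q' = P + 1` when
`S ≥ P + 1`. In the latter case the middle logarithm is at most `log₂ (4 (P + 1))`, since
`(√P + √(P + 1))² ≤ 2 (2P + 1)`. The sign of `s` never matters, as `|s √Q'| = √(Q' s²)`.
-/

open Real

/-- The piecewise closed-form outer-bound expression of Lemma 2 (in bits),
with `S = Q·sin²Δ`. -/
noncomputable def Rout (P Q Δ : ℝ) : ℝ :=
  if Q * (sin Δ) ^ 2 ≤ 1 then logb 2 (P + 1) + 2
  else if P + 1 ≤ Q * (sin Δ) ^ 2 then (3 / 4) * logb 2 (P + 1) + 2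
  else (1 / 2) * logb 2 (P + 1)
      + (1 / 2) * logb 2 (1 + (Real.sqrt P + Real.sqrt (Q * (sin Δ) ^ 2)) ^ 2)
      - (1 / 4) * logb 2 (2 * (Q * (sin Δ) ^ 2)) + 2

/-- The genie-free outer-bound expression at correlation `ρ` and reduced interference power `Q'`,
with `s = sin Δ`. -/
noncomputable def genieFreeBound (P s Q' ρ : ℝ) : ℝ :=
  (1 / 2) * logb 2 (1 + P) + (1 / 2) * logb 2 (1 + (√P + s * √Q') ^ 2)
    - (1 / 4) * logb 2 ((2 * s ^ 2 * Q' + 1 - ρ) * (1 + ρ)) + 2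

lemma logb_two_pow_mul (n : ℕ) {x : ℝ} (hx : x ≠ 0) : logb 2 (2 ^ n * x) = n + logb 2 x := by
  rw [logb_mul (by positivity) hx, logb_pow, logb_self_eq_one one_lt_two, mul_one]

lemma sq_sqrt_add_mul_sqrt_le (P Q s : ℝ) : (√P + s * √Q) ^ 2 ≤ (√P + √(Q * s ^ 2)) ^ 2 := by
  have hsQ : |s * √Q| = √(Q * s ^ 2) := by
    rw [sqrt_mul' Q (sq_nonneg s), sqrt_sq_eq_abs, abs_mul, abs_of_nonneg (sqrt_nonneg Q),
      mul_comm]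
  apply sq_le_sq'
  · linarith [neg_abs_le (s * √Q), sqrt_nonneg P]
  · linarith [le_abs_self (s * √Q)]

lemma one_add_sq_sqrt_add_sqrt_add_one_le {P : ℝ} (hP : 0 ≤ P) :
    1 + (√P + √(P + 1)) ^ 2 ≤ 2 ^ 2 * (P + 1) := by
  have hP' := sq_sqrt hP
  have hP1 := sq_sqrt (by linarith : 0 ≤ P + 1)
  nlinarith [sq_nonneg (√P - √(P + 1))]

lemma genieFreeBound_zero_zero {P : ℝ} (hP : 0 ≤ P) (s : ℝ) :
    genieFreeBound P s 0 0 = logb 2 (P + 1) + 2 := by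
  simp only [genieFreeBound, sqrt_zero, mul_zero, add_zero, sub_zero, mul_one, sq_sqrt hP,
    zero_add, logb_one]
  rw [add_comm 1 P]
  ring

lemma genieFreeBound_one_le (P : ℝ) {s Q' : ℝ} (hQ' : 0 < Q' * s ^ 2) :
    genieFreeBound P s Q' 1 ≤ (1 / 2) * logb 2 (P + 1)
      + (1 / 2) * logb 2 (1 + (√P + √(Q' * s ^ 2)) ^ 2)
      - (1 / 4) * logb 2 (Q' * s ^ 2) + 3 / 2 := by
  have hArg : (2 * s ^ 2 * Q' + 1 - 1) * (1 + 1) = 2 ^ 2 * (Q' * s ^ 2) := by ring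
  have hMid : logb 2 (1 + (√P + s * √Q') ^ 2) ≤ logb 2 (1 + (√P + √(Q' * s ^ 2)) ^ 2) :=
    logb_le_logb_of_le one_lt_two (by positivity) (by linarith [sq_sqrt_add_mul_sqrt_le P Q' s])
  rw [genieFreeBound, hArg, logb_two_pow_mul 2 hQ'.ne', add_comm 1 P]
  push_cast
  linarith

lemma genieFreeBound_one_le_of_mul_sq_eq {P : ℝ} (hP : 0 ≤ P) {s Q' : ℝ}
    (hQ' : Q' * s ^ 2 = P + 1) : genieFreeBound P s Q' 1 ≤ (3 / 4) * logb 2 (P + 1) + 5 / 2 := by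
  have hBound := genieFreeBound_one_le P (hQ'.symm ▸ (by linarith : (0 : ℝ) < P + 1))
  have hMid :=
    logb_le_logb_of_le one_lt_two (by positivity) (one_add_sq_sqrt_add_sqrt_add_one_le hP)
  rw [hQ'] at hBound
  rw [logb_two_pow_mul 2 (by linarith), Nat.cast_ofNat] at hMid
  linarith

theorem stmt_1_general (P Q Δ : ℝ) (hP : 0 ≤ P) (hQ : 0 ≤ Q) :
    ∃ ρ ∈ Set.Icc (-1 : ℝ) 1, ∃ Q' ∈ Set.Icc (0 : ℝ) Q,
      0 < (2 * (sin Δ) ^ 2 * Q' + 1 - ρ) * (1 + ρ) ∧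
      (1 / 2) * logb 2 (1 + P)
        + (1 / 2) * logb 2 (1 + (Real.sqrt P + sin Δ * Real.sqrt Q') ^ 2)
        - (1 / 4) * logb 2 ((2 * (sin Δ) ^ 2 * Q' + 1 - ρ) * (1 + ρ)) + 2
      ≤ Rout P Q Δ + 1 / 2 := by
  rcases le_or_gt (Q * sin Δ ^ 2) 1 with hS | hS
  · refine ⟨0, by norm_num, 0, ⟨le_rfl, hQ⟩, by norm_num, ?_⟩
    show genieFreeBound P (sin Δ) 0 0 ≤ _
    rw [Rout, if_pos hS]
    linarith [genieFreeBound_zero_zero hP (sin Δ)]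
  have hs : sin Δ ^ 2 ≠ 0 := fun h => by simp only [h, mul_zero] at hS; linarith
  rcases le_or_gt (P + 1) (Q * sin Δ ^ 2) with hSP | hSP
  · have hQ' : (P + 1) / sin Δ ^ 2 * sin Δ ^ 2 = P + 1 := div_mul_cancel₀ _ hs
    refine ⟨1, by norm_num, (P + 1) / sin Δ ^ 2, ⟨by positivity, ?_⟩, by nlinarith, ?_⟩
    · rwa [div_le_iff₀ (by positivity)]
    show genieFreeBound P (sin Δ) _ 1 ≤ _
    rw [Rout, if_neg hS.not_ge, if_pos hSP]
    linarith [genieFreeBound_one_le_of_mul_sq_eq hP hQ']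
  · refine ⟨1, by norm_num, Q, ⟨hQ, le_rfl⟩, by nlinarith, ?_⟩
    have hBound := genieFreeBound_one_le P (by linarith : 0 < Q * sin Δ ^ 2)
    have hLog := logb_two_pow_mul 1 (by linarith : Q * sin Δ ^ 2 ≠ 0)
    rw [pow_one, Nat.cast_one] at hLog
    show genieFreeBound P (sin Δ) Q 1 ≤ _
    rw [Rout, if_neg hS.not_ge, if_neg hSP.not_ge]
    linarith

/-- Lemma 2: there are admissible `ρ ∈ [−1,1]` and `Q' ∈ [0,Q]` for which the genie-free
outer-bound expression is upper bounded by the closed form `Rout` plus 1/2 bit. -/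
theorem stmt_1 (P Q Δ : ℝ) (hP : 0 ≤ P) (hQ : 0 ≤ Q)
    (hΔ : Δ ∈ Set.Icc (π / 4) (π / 2)) :
    ∃ ρ ∈ Set.Icc (-1 : ℝ) 1, ∃ Q' ∈ Set.Icc (0 : ℝ) Q,
      0 < (2 * (sin Δ) ^ 2 * Q' + 1 - ρ) * (1 + ρ) ∧
      (1 / 2) * logb 2 (1 + P)
        + (1 / 2) * logb 2 (1 + (Real.sqrt P + sin Δ * Real.sqrt Q') ^ 2)
        - (1 / 4) * logb 2 ((2 * (sin Δ) ^ 2 * Q' + 1 - ρ) * (1 + ρ)) + 2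
      ≤ Rout P Q Δ + 1 / 2 :=
  stmt_1_general P Q Δ hP hQ
end

section
/- For all real numbers P ≥ 0, Q ≥ 0 and Δ ∈ [π/4, π/2], writing S = Q·sin²Δ, the outer- and inner-bound expressions satisfy R_out(P,Q,Δ) − R_in(P,S) ≤ 9/2. -/
open Real

/-- The piecewise closed-form inner-bound expression of Lemma 4 (in bits). -/
noncomputable def Rin (P S : ℝ) : ℝ :=
  if S ≤ 1 then (1 / 2) * logb 2 (1 + P / 2) + (1 / 2) * logb 2 (1 + P / (2 + 2 * S))
  else if P + 1 ≤ S then (3 / 4) * logb 2 (1 + P / 2) - 1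
  else (1 / 2) * logb 2 (1 + P / 2) + (1 / 2) * logb 2 (1 / 2 + (P + 2) / (2 * S))
      + (1 / 4) * logb 2 S - 5 / 4

theorem logb_le_logb_add_one_of_le_mul {b x y : ℝ} (hb : 1 < b) (hx : 0 < x) (h : x ≤ b * y) :
    logb b x ≤ logb b y + 1 := by
  have hy : 0 < y := pos_of_mul_pos_right (hx.trans_le h) (by linarith)
  calc logb b x ≤ logb b (b * y) := logb_le_logb_of_le hb hx h
    _ = logb b y + 1 := by
      rw [logb_mul (by positivity) hy.ne', logb_self_eq_one hb, add_comm]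

section Estimates

variable {P S : ℝ}

theorem logb_two_add_one_le (hP : 0 ≤ P) : logb 2 (P + 1) ≤ logb 2 (1 + P / 2) + 1 :=
  logb_le_logb_add_one_of_le_mul one_lt_two (by linarith) (by linarith)

theorem logb_two_one_add_half_le (hP : 0 ≤ P) (hS : 0 ≤ S) (hS1 : S ≤ 1) :
    logb 2 (1 + P / 2) ≤ logb 2 (1 + P / (2 + 2 * S)) + 1 := by
  refine logb_le_logb_add_one_of_le_mul one_lt_two (by positivity) ?_
  have : P / 4 ≤ P / (2 + 2 * S) := div_le_div_of_nonneg_left hP (by positivity) (by linarith)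
  linarith

theorem logb_two_one_add_sq_sqrt_add_sqrt_le (hP : 0 ≤ P) (hS : 0 ≤ S) :
    logb 2 (1 + (√P + √S) ^ 2) ≤ logb 2 (P + 1 + S) + 1 := by
  refine logb_le_logb_add_one_of_le_mul one_lt_two (by positivity) ?_
  nlinarith [sq_nonneg (√P - √S), sq_sqrt hP, sq_sqrt hS]

theorem logb_two_add_add_le (hP : 0 ≤ P) (hS : 0 < S) :
    logb 2 (P + 1 + S) ≤ logb 2 S + logb 2 (1 / 2 + (P + 2) / (2 * S)) + 1 := by
  have hw : 0 < 1 / 2 + (P + 2) / (2 * S) := by positivity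
  rw [← logb_mul hS.ne' hw.ne']
  refine logb_le_logb_add_one_of_le_mul one_lt_two (by positivity) ?_
  have : S * (1 / 2 + (P + 2) / (2 * S)) = (S + P + 2) / 2 := by field_simp; ring
  linarith

end Estimates

theorem stmt_3_general (P Q Δ : ℝ) (hP : 0 ≤ P) (hQ : 0 ≤ Q) :
    Rout P Q Δ - Rin P (Q * (sin Δ) ^ 2) ≤ 9 / 2 := by
  set S := Q * sin Δ ^ 2
  have hS : 0 ≤ S := by positivity
  have hPlog := logb_two_add_one_le hP
  unfold Rout Rin
  split_ifs with hS1
  · linarith [logb_two_one_add_half_le hP hS hS1]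
  · linarith
  · have hS0 : 0 < S := by linarith
    have h2S : logb 2 (2 * S) = logb 2 S + 1 := by
      rw [logb_mul two_ne_zero hS0.ne', logb_self_eq_one one_lt_two, add_comm]
    linarith [logb_two_one_add_sq_sqrt_add_sqrt_le hP hS, logb_two_add_add_le hP hS0]

/-- Theorem 7 (finite gap): the closed-form outer and inner bounds differ by at most 9/2 bits. -/
theorem stmt_3 (P Q Δ : ℝ) (hP : 0 ≤ P) (hQ : 0 ≤ Q)
    (hΔ : Δ ∈ Set.Icc (π / 4) (π / 2)) :
    Rout P Q Δ - Rin P (Q * (sin Δ) ^ 2) ≤ 9 / 2 :=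
  stmt_3_general P Q Δ hP hQ
end

section
/- For all real numbers P ≥ 0 and 0 ≤ S ≤ 1, one has [log₂(P+1) + 2] − [(1/2)·log₂(1+P/2) + (1/2)·log₂(1+P/(2+2S))] ≤ 7/2. -/
open Real

/-! Each inner-bound term loses at most a constant against `log₂ (P + 1)`:
`1 + P/2 ≥ (P + 1)/2` and, since `2 + 2S ≤ 4`, `1 + P/(2 + 2S) ≥ (P + 1)/4`.
Hence the inner bound is at least `log₂ (P + 1) - 3/2`, and the gap at most `2 + 3/2`. -/

lemma Real.logb_sub_logb_le_of_div_le {b x c y : ℝ} (hb : 1 < b) (hx : 0 < x) (hc : 0 < c)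
    (h : x / c ≤ y) : logb b x - logb b c ≤ logb b y := by
  rw [← logb_div hx.ne' hc.ne']
  exact logb_le_logb_of_le hb (div_pos hx hc) h

lemma Real.logb_two_four : logb 2 4 = 2 := by
  rw [show (4 : ℝ) = 2 ^ (2 : ℕ) by norm_num, logb_pow, logb_self_eq_one one_lt_two]
  norm_num

/-- Low-interference case (`S ≤ 1`) of the finite-gap theorem. -/
theorem stmt_4 (P S : ℝ) (hP : 0 ≤ P) (hS0 : 0 ≤ S) (hS1 : S ≤ 1) :
    (logb 2 (P + 1) + 2)
      - ((1 / 2) * logb 2 (1 + P / 2) + (1 / 2) * logb 2 (1 + P / (2 + 2 * S)))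
    ≤ 7 / 2 := by
  have hP1 : 0 < P + 1 := by linarith
  have h_half : logb 2 (P + 1) - 1 ≤ logb 2 (1 + P / 2) := by
    simpa only [logb_self_eq_one one_lt_two] using
      logb_sub_logb_le_of_div_le (y := 1 + P / 2) one_lt_two hP1 two_pos (by linarith)
  have h_quarter : P / 4 ≤ P / (2 + 2 * S) :=
    div_le_div_of_nonneg_left hP (by linarith) (by linarith)
  have h_interf : logb 2 (P + 1) - 2 ≤ logb 2 (1 + P / (2 + 2 * S)) := by
    simpa only [logb_two_four] using
      logb_sub_logb_le_of_div_le (y := 1 + P / (2 + 2 * S)) one_lt_two hP1 four_pos (by linarith)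
  linarith
end

section
/- For all real numbers P ≥ 0 and S with 1 < S < P+1, one has [(1/2)·log₂(P+1) + (1/2)·log₂(1+(√P+√S)²) − (1/4)·log₂(2S) + 2] − [(1/2)·log₂(1+P/2) + (1/2)·log₂(1/2+(P+2)/(2S)) + (1/4)·log₂(S) − 5/4] ≤ 9/2. -/
/-!
Collecting the logarithms, the gap equals
`(1/2) log₂ ((P+1)(1 + (√P+√S)²) / ((1+P/2)(1/2 + (P+2)/(2S)) S)) + 3`.
Since `(√P+√S)² ≤ 2(P+S)` and `(1+P/2)(1/2 + (P+2)/(2S)) S = (P+2)(P+S+2)/4`, the ratio is at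
most `8`, which bounds the gap by `3/2 + 3 = 9/2`.
-/

open Real

lemma sq_sqrt_add_sqrt_le {x y : ℝ} (hx : 0 ≤ x) (hy : 0 ≤ y) :
    (√x + √y) ^ 2 ≤ 2 * (x + y) := by
  simpa only [sq_sqrt hx, sq_sqrt hy] using add_sq_le (a := √x) (b := √y)

lemma outer_product_le_eight_mul_inner_product {P S : ℝ} (hP : 0 ≤ P) (hS : 0 < S) :
    (P + 1) * (1 + (√P + √S) ^ 2)
      ≤ 2 ^ (3 : ℝ) * ((1 + P / 2) * ((1 / 2 + (P + 2) / (2 * S)) * S)) := by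
  have inner_eq : 2 ^ (3 : ℝ) * ((1 + P / 2) * ((1 / 2 + (P + 2) / (2 * S)) * S))
      = 2 * (P + 2) * (P + S + 2) := by
    norm_num
    field_simp
    ring
  rw [inner_eq]
  calc (P + 1) * (1 + (√P + √S) ^ 2) ≤ (P + 1) * (1 + 2 * (P + S)) := by
        gcongr; exact sq_sqrt_add_sqrt_le hP hS.le
    _ ≤ 2 * (P + 2) * (P + S + 2) := by nlinarith

lemma logb_outer_le_three_add_logb_inner {P S : ℝ} (hP : 0 ≤ P) (hS : 0 < S) :
    logb 2 (P + 1) + logb 2 (1 + (√P + √S) ^ 2)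
      ≤ 3 + logb 2 (1 + P / 2) + logb 2 (1 / 2 + (P + 2) / (2 * S)) + logb 2 S := by
  have h := logb_le_logb_of_le one_lt_two (by positivity)
    (outer_product_le_eight_mul_inner_product hP hS)
  rwa [logb_mul (by positivity) (by positivity), logb_mul (by positivity) (by positivity),
    logb_mul (by positivity) (by positivity), logb_mul (by positivity) hS.ne',
    logb_rpow two_pos (by norm_num), ← add_assoc, ← add_assoc] at h

theorem stmt_6_general (P S : ℝ) (hP : 0 ≤ P) (hS1 : 1 < S) :
    ((1 / 2) * logb 2 (P + 1) + (1 / 2) * logb 2 (1 + (Real.sqrt P + Real.sqrt S) ^ 2)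
        - (1 / 4) * logb 2 (2 * S) + 2)
      - ((1 / 2) * logb 2 (1 + P / 2) + (1 / 2) * logb 2 (1 / 2 + (P + 2) / (2 * S))
        + (1 / 4) * logb 2 S - 5 / 4)
    ≤ 9 / 2 := by
  have hS : 0 < S := one_pos.trans hS1
  have log_two_mul : logb 2 (2 * S) = 1 + logb 2 S := by
    rw [logb_mul two_ne_zero hS.ne', logb_self_eq_one one_lt_two]
  rw [log_two_mul]
  linarith [logb_outer_le_three_add_logb_inner hP hS]

/-- Intermediate-interference case (`1 < S < P+1`) of the finite-gap theorem. -/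
theorem stmt_6 (P S : ℝ) (hP : 0 ≤ P) (hS1 : 1 < S) (hS2 : S < P + 1) :
    ((1 / 2) * logb 2 (P + 1) + (1 / 2) * logb 2 (1 + (Real.sqrt P + Real.sqrt S) ^ 2)
        - (1 / 4) * logb 2 (2 * S) + 2)
      - ((1 / 2) * logb 2 (1 + P / 2) + (1 / 2) * logb 2 (1 / 2 + (P + 2) / (2 * S))
        + (1 / 4) * logb 2 S - 5 / 4)
    ≤ 9 / 2 :=
  stmt_6_general P S hP hS1
end

section
/- For all real numbers P ≥ 0 and Q ≥ 0, one has [(1/2)·log₂(1+P) + (1/2)·log₂(1+P+Q+2√(PQ)) − (1/2)·log₂(1+Q) + 3/2] − [(1/2)·log₂(1+Q+P/2) − (1/2)·log₂(1+Q) + (1/2)·log₂(1+P/2) − 3] ≤ 6. -/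
/-!
Up to the constant `9/2`, the gap is half of
`log₂ ((1 + P) (1 + P + Q + 2√(PQ))) - log₂ ((1 + P/2) (1 + Q + P/2))`.
Factor by factor, `1 + P ≤ 2 (1 + P/2)` and, by AM–GM, `1 + P + Q + 2√(PQ) ≤ 1 + 2P + 2Q ≤
4 (1 + Q + P/2)`, so this difference of logarithms is at most `1 + 2 = 3` and the gap at most
`3/2 + 9/2 = 6`.
-/

open Real

lemma Real.two_mul_sqrt_mul_le_add {x y : ℝ} (hx : 0 ≤ x) (hy : 0 ≤ y) :
    2 * √(x * y) ≤ x + y := by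
  have h := two_mul_le_add_sq (√x) (√y)
  rwa [sq_sqrt hx, sq_sqrt hy, mul_assoc, ← sqrt_mul hx] at h

lemma Real.logb_le_add_logb_of_le_pow_mul {b x y : ℝ} (hb : 1 < b) (hx : 0 < x) (hy : 0 < y)
    {k : ℕ} (hxy : x ≤ b ^ k * y) : logb b x ≤ k + logb b y := by
  have hbk : b ^ k ≠ 0 := pow_ne_zero k (by linarith)
  calc logb b x ≤ logb b (b ^ k * y) := logb_le_logb_of_le hb hx hxy
    _ = k + logb b y := by
      rw [logb_mul hbk hy.ne', logb_pow, logb_self_eq_one hb, mul_one]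

/-- Theorem 10 (finite gap for circular uniform phase fading): the outer bound `R^OUT-C`
and the inner bound `R^IN-U` at `α = 1/2` differ by at most 6 bits. -/
theorem stmt_7 (P Q : ℝ) (hP : 0 ≤ P) (hQ : 0 ≤ Q) :
    ((1 / 2) * logb 2 (1 + P) + (1 / 2) * logb 2 (1 + P + Q + 2 * Real.sqrt (P * Q))
        - (1 / 2) * logb 2 (1 + Q) + 3 / 2)
      - ((1 / 2) * logb 2 (1 + Q + P / 2) - (1 / 2) * logb 2 (1 + Q)
        + (1 / 2) * logb 2 (1 + P / 2) - 3)
    ≤ 6 := by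
  have hsqrt := two_mul_sqrt_mul_le_add hP hQ
  have hP_gap : logb 2 (1 + P) ≤ (1 : ℕ) + logb 2 (1 + P / 2) :=
    logb_le_add_logb_of_le_pow_mul one_lt_two (by linarith) (by linarith) (by linarith)
  have hPQ_gap : logb 2 (1 + P + Q + 2 * √(P * Q)) ≤ (2 : ℕ) + logb 2 (1 + Q + P / 2) :=
    logb_le_add_logb_of_le_pow_mul one_lt_two (by positivity) (by linarith) (by linarith)
  push_cast at hP_gap hPQ_gap
  linarith
end

section
/- For every real Q > 0, one has (1/(2π))·∫₀^{2π} ln(1 + Q·sin²t) dt ≥ ln(1+Q) − 2 + (2/√Q)·arctan(√Q). -/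
/-!
Since `sin² t` is `π`-periodic and symmetric about `π / 2`, the circular average of
`log (1 + Q sin² t)` equals its average over `[0, π / 2]`. There Jordan's inequality
`sin t ≥ 2t / π` and the monotonicity of `u ↦ log (1 + Q u²)` on `u ≥ 0` bound the integrand
below by `log (1 + Q (2t / π)²)`, whose average over `[0, π / 2]` is `∫₀¹ log (1 + Q u²) du`,
computed with the antiderivative `u log (1 + Q u²) - 2u + (2 / √Q) arctan (√Q u)`.
-/

open Real Set intervalIntegral MeasureTheory

theorem integral_zero_two_pi_eq_four_mul_of_periodic_pi {f : ℝ → ℝ} (hper : Function.Periodic f π)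
    (hsymm : ∀ t, f (π - t) = f t) (hf : ∀ a b, IntervalIntegrable f volume a b) :
    ∫ t in (0 : ℝ)..2 * π, f t = 4 * ∫ t in (0 : ℝ)..π / 2, f t := by
  have hhalf : ∫ t in π / 2..π, f t = ∫ t in (0 : ℝ)..π / 2, f t := by
    have := integral_comp_sub_left f π (a := 0) (b := π / 2)
    simp only [hsymm, sub_zero, show π - π / 2 = π / 2 by ring] at this
    exact this.symm
  have hperiod : ∫ t in (0 : ℝ)..2 * π, f t = 2 * ∫ t in (0 : ℝ)..π, f t := by
    simpa using hper.intervalIntegral_add_zsmul_eq 2 0 hf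
  rw [hperiod, ← integral_add_adjacent_intervals (hf 0 (π / 2)) (hf (π / 2) π), hhalf]
  ring

theorem mul_integral_le_integral_comp_sin {g : ℝ → ℝ} (hg : MonotoneOn g (Icc 0 1)) :
    π / 2 * ∫ u in (0 : ℝ)..1, g u ≤ ∫ t in (0 : ℝ)..π / 2, g (sin t) := by
  have hπ : 0 < π := pi_pos
  have hmaps : ∀ t ∈ Icc 0 (π / 2), 2 / π * t ∈ Icc (0 : ℝ) 1 := fun t ht =>
    ⟨by have := ht.1; positivity, by rw [div_mul_eq_mul_div, div_le_one hπ]; linarith [ht.2]⟩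
  have hsin : ∀ t ∈ Icc 0 (π / 2), sin t ∈ Icc (0 : ℝ) 1 := fun t ht =>
    ⟨sin_nonneg_of_nonneg_of_le_pi ht.1 (by linarith [ht.2]), sin_le_one t⟩
  have hlinear : ∫ t in (0 : ℝ)..π / 2, g (2 / π * t) = π / 2 * ∫ u in (0 : ℝ)..1, g u := by
    rw [integral_comp_mul_left g (by positivity : (2 / π : ℝ) ≠ 0), mul_zero, show 2 / π * (π / 2) = 1 by field_simp, smul_eq_mul, inv_div]
  rw [← hlinear]
  refine integral_mono_on (by positivity) ?_ ?_ fun t ht =>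
    hg (hmaps t ht) (hsin t ht) (mul_le_sin ht.1 ht.2)
  · refine MonotoneOn.intervalIntegrable ?_
    rw [uIcc_of_le (by positivity)]
    exact hg.comp (fun x hx y hy hxy => by gcongr) hmaps
  · refine MonotoneOn.intervalIntegrable ?_
    rw [uIcc_of_le (by positivity)]
    exact hg.comp (fun x hx y hy hxy =>
      sin_le_sin_of_le_of_le_pi_div_two (by linarith [hx.1]) hy.2 hxy) hsin

theorem integral_log_one_add_mul_sq {Q : ℝ} (hQ : 0 < Q) (b : ℝ) :
    ∫ u in (0 : ℝ)..b, log (1 + Q * u ^ 2)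
      = b * log (1 + Q * b ^ 2) - 2 * b + 2 / √Q * arctan (√Q * b) := by
  have hpos : ∀ u : ℝ, 0 < 1 + Q * u ^ 2 := fun u => by positivity
  have hderiv : ∀ u ∈ uIcc (0 : ℝ) b, HasDerivAt
      (fun u => u * log (1 + Q * u ^ 2) - 2 * u + 2 / √Q * arctan (√Q * u))
      (log (1 + Q * u ^ 2)) u := by
    intro u _
    have hinner : HasDerivAt (fun u : ℝ => 1 + Q * u ^ 2) (Q * (2 * u)) u := by
      simpa using ((hasDerivAt_pow 2 u).const_mul Q).const_add 1
    have harctan : HasDerivAt (fun u => arctan (√Q * u)) (1 / (1 + (√Q * u) ^ 2) * √Q) u :=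
      (hasDerivAt_arctan _).comp u (by simpa using (hasDerivAt_id u).const_mul √Q)
    refine ((((hasDerivAt_id u).mul (hinner.log (hpos u).ne')).sub
      ((hasDerivAt_id u).const_mul 2)).add (harctan.const_mul (2 / √Q))).congr_deriv ?_
    rw [mul_pow, sq_sqrt hQ.le, id]
    field_simp [(hpos u).ne']
    ring
  have hcont : Continuous fun u : ℝ => log (1 + Q * u ^ 2) :=
    (by fun_prop : Continuous fun u : ℝ => 1 + Q * u ^ 2).log fun u => (hpos u).ne'
  rw [integral_eq_sub_of_hasDerivAt hderiv (hcont.intervalIntegrable 0 b)]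
  simp

theorem monotoneOn_log_one_add_mul_sq {Q : ℝ} (hQ : 0 ≤ Q) :
    MonotoneOn (fun u : ℝ => log (1 + Q * u ^ 2)) (Ici 0) := fun u hu v _ huv =>
  log_le_log (by positivity) (by gcongr)

/-- Key integral inequality for the outer bound with circular uniform phase fading. -/
theorem stmt_10 (Q : ℝ) (hQ : 0 < Q) :
    (1 / (2 * π)) * ∫ t in (0 : ℝ)..(2 * π), Real.log (1 + Q * (sin t) ^ 2)
      ≥ Real.log (1 + Q) - 2 + (2 / Real.sqrt Q) * Real.arctan (Real.sqrt Q) := by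
  have hcont : Continuous fun t => log (1 + Q * sin t ^ 2) :=
    (by fun_prop : Continuous fun t => 1 + Q * sin t ^ 2).log fun t => by positivity
  have hper : Function.Periodic (fun t => log (1 + Q * sin t ^ 2)) π := fun t => by
    simp only [sin_add_pi, neg_sq]
  have hsymm : ∀ t, log (1 + Q * sin (π - t) ^ 2) = log (1 + Q * sin t ^ 2) := fun t => by
    rw [sin_pi_sub]
  rw [ge_iff_le,
    integral_zero_two_pi_eq_four_mul_of_periodic_pi hper hsymm hcont.intervalIntegrable]
  calc Real.log (1 + Q) - 2 + 2 / √Q * arctan √Q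
      = 2 / π * (π / 2 * ∫ u in (0 : ℝ)..1, log (1 + Q * u ^ 2)) := by
        rw [integral_log_one_add_mul_sq hQ]
        field_simp
    _ ≤ 2 / π * ∫ t in (0 : ℝ)..π / 2, log (1 + Q * sin t ^ 2) := by
        gcongr
        exact mul_integral_le_integral_comp_sin
          ((monotoneOn_log_one_add_mul_sq hQ.le).mono Icc_subset_Ici_self)
    _ = 1 / (2 * π) * (4 * ∫ t in (0 : ℝ)..π / 2, log (1 + Q * sin t ^ 2)) := by ring
end

section
/- For all real numbers p ≥ 0 and q > 0, one has (2/π)·∫₀^{π/2} ln(1 + p/(1 + (4q/π²)·t²)) dt = ln((1+p+q)/(1+q)) + 2·√((1+p)/q)·arctan(√(q/(1+p))) − (2/√q)·arctan(√q). -/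
open Real

/-! With `a = 2√q/π` and `b = √(1+p)` the integrand is `log (b² + (a t)²) - log (1 + (a t)²)`,
and `t log (c² + (a t)²) - 2 t + (2c/a) arctan (a t / c)` is an antiderivative of
`log (c² + (a t)²)`. The linear terms cancel in the difference, and at `t = π/2` one has `a t = √q`. -/

theorem hasDerivAt_log_sq_add_mul_sq {a c : ℝ} (ha : a ≠ 0) (hc : c ≠ 0) (t : ℝ) :
    HasDerivAt (fun t => t * log (c ^ 2 + (a * t) ^ 2) - 2 * t + 2 * c / a * arctan (a * t / c))
      (log (c ^ 2 + (a * t) ^ 2)) t := by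
  have hpos : 0 < c ^ 2 + (a * t) ^ 2 := by positivity
  have hinner : HasDerivAt (fun t => c ^ 2 + (a * t) ^ 2) (2 * (a * t) * a) t := by
    simpa using (((hasDerivAt_id t).const_mul a).pow 2).const_add (c ^ 2)
  have hlin : HasDerivAt (fun t => a * t / c) (a / c) t := by
    simpa using ((hasDerivAt_id t).const_mul a).div_const c
  have hsum : HasDerivAt
      (fun t => t * log (c ^ 2 + (a * t) ^ 2) - 2 * t + 2 * c / a * arctan (a * t / c))
      (1 * log (c ^ 2 + (a * t) ^ 2) + t * (2 * (a * t) * a / (c ^ 2 + (a * t) ^ 2)) - 2 * 1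
        + 2 * c / a * (1 / (1 + (a * t / c) ^ 2) * (a / c))) t :=
    (((hasDerivAt_id t).mul (hinner.log hpos.ne')).sub ((hasDerivAt_id t).const_mul 2)).add
      ((hlin.arctan).const_mul (2 * c / a))
  refine hsum.congr_deriv ?_
  have hratio : 1 + (a * t / c) ^ 2 = (c ^ 2 + (a * t) ^ 2) / c ^ 2 := by field_simp
  rw [hratio]
  field_simp
  ring

theorem continuous_log_sq_add_mul_sq {c : ℝ} (a : ℝ) (hc : c ≠ 0) :
    Continuous fun t => log (c ^ 2 + (a * t) ^ 2) :=
  (by fun_prop : Continuous fun t => c ^ 2 + (a * t) ^ 2).log fun t => by positivity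

theorem integral_log_sq_add_mul_sq {a c : ℝ} (ha : a ≠ 0) (hc : c ≠ 0) (x : ℝ) :
    ∫ t in (0 : ℝ)..x, log (c ^ 2 + (a * t) ^ 2)
      = x * log (c ^ 2 + (a * x) ^ 2) - 2 * x + 2 * c / a * arctan (a * x / c) := by
  rw [intervalIntegral.integral_eq_sub_of_hasDerivAt
    (fun t _ => hasDerivAt_log_sq_add_mul_sq ha hc t)
    ((continuous_log_sq_add_mul_sq a hc).intervalIntegrable 0 x)]
  simp

/-- Closed-form evaluation of the Jordan-bounded interference-as-noise rate integral. -/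
theorem stmt_12 (p q : ℝ) (hp : 0 ≤ p) (hq : 0 < q) :
    (2 / π) * ∫ t in (0 : ℝ)..(π / 2), Real.log (1 + p / (1 + (4 * q / π ^ 2) * t ^ 2))
      = Real.log ((1 + p + q) / (1 + q))
        + 2 * Real.sqrt ((1 + p) / q) * Real.arctan (Real.sqrt (q / (1 + p)))
        - (2 / Real.sqrt q) * Real.arctan (Real.sqrt q) := by
  set a := 2 * √q / π with ha_def
  set b := √(1 + p)
  have hsq : 0 < √q := sqrt_pos.mpr hq
  have ha : a ≠ 0 := by positivity
  have hb : 0 < b := sqrt_pos.mpr (by linarith)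
  have hb2 : b ^ 2 = 1 + p := sq_sqrt (by linarith)
  have haπ : a * (π / 2) = √q := by rw [ha_def]; field_simp
  have hintegrand : ∀ t : ℝ, log (1 + p / (1 + (4 * q / π ^ 2) * t ^ 2))
      = log (b ^ 2 + (a * t) ^ 2) - log (1 ^ 2 + (a * t) ^ 2) := fun t => by
    have hat : (a * t) ^ 2 = 4 * q / π ^ 2 * t ^ 2 := by
      rw [mul_pow, div_pow, mul_pow, sq_sqrt hq.le]; ring
    rw [← log_div (by positivity) (by positivity), hb2, hat]
    congr 1
    field_simp
    ring
  simp_rw [hintegrand]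
  rw [intervalIntegral.integral_sub
      ((continuous_log_sq_add_mul_sq a hb.ne').intervalIntegrable _ _)
      ((continuous_log_sq_add_mul_sq a one_ne_zero).intervalIntegrable _ _),
    integral_log_sq_add_mul_sq ha hb.ne', integral_log_sq_add_mul_sq ha one_ne_zero, haπ,
    sq_sqrt hq.le, hb2, sqrt_div (by linarith), sqrt_div hq.le,
    log_div (by positivity) (by positivity), ha_def]
  field_simp
  ring
end

section
/- For every real P ≥ 0, the function F(u) = (1/2)·log₂(1 + (√P + √u)²) − (1/4)·log₂(4u) on (0, ∞) attains its minimum at u = P+1; that is, F(u) ≥ F(P+1) for all u > 0. -/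
/-!
Since `4u = (2√u)²`, the objective equals `½·log₂((1 + (√P + √u)²) / (2√u))`, so it
suffices to minimise `(1 + (s + t)²) / (2t)` over `t > 0`, where `s = √P`. With `c² = 1 + s²`
this quotient is `s + (c² + t²) / (2t) ≥ s + c` by AM–GM, with equality at `t = c = √(P + 1)`.
-/

open Real

lemma half_logb_sub_quarter_logb_four_mul {x u : ℝ} (hx : x ≠ 0) (hu : 0 < u) :
    (1 / 2) * logb 2 x - (1 / 4) * logb 2 (4 * u) = (1 / 2) * logb 2 (x / (2 * √u)) := by
  have h4u : 4 * u = (2 * √u) ^ 2 := by rw [mul_pow, sq_sqrt hu.le]; norm_num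
  rw [h4u, logb_pow, logb_div hx (by positivity)]
  ring

lemma one_add_add_sq_div_two_mul_le {s t c : ℝ} (ht : 0 < t) (hc : 0 < c)
    (hcs : c ^ 2 = 1 + s ^ 2) :
    (1 + (s + c) ^ 2) / (2 * c) ≤ (1 + (s + t) ^ 2) / (2 * t) := by
  have hmin : (1 + (s + c) ^ 2) / (2 * c) = s + c := by
    field_simp
    linear_combination -hcs
  rw [hmin, le_div_iff₀ (by positivity)]
  nlinarith [sq_nonneg (t - c)]

/-- Optimization over the reduced interference power in Lemma 2: the function
`F(u) = (1/2)·log₂(1+(√P+√u)²) − (1/4)·log₂(4u)` on `(0,∞)` attains its minimum at `u = P+1`. -/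
theorem stmt_15 (P : ℝ) (hP : 0 ≤ P) :
    ∀ u : ℝ, 0 < u →
      (1 / 2) * logb 2 (1 + (Real.sqrt P + Real.sqrt (P + 1)) ^ 2)
          - (1 / 4) * logb 2 (4 * (P + 1))
      ≤ (1 / 2) * logb 2 (1 + (Real.sqrt P + Real.sqrt u) ^ 2)
          - (1 / 4) * logb 2 (4 * u) := by
  intro u hu
  have hP1 : 0 < P + 1 := by linarith
  have hcs : √(P + 1) ^ 2 = 1 + √P ^ 2 := by rw [sq_sqrt hP1.le, sq_sqrt hP]; ring
  rw [half_logb_sub_quarter_logb_four_mul (by positivity) hP1,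
    half_logb_sub_quarter_logb_four_mul (by positivity) hu]
  refine mul_le_mul_of_nonneg_left (logb_le_logb_of_le one_lt_two (by positivity) ?_) (by norm_num)
  exact one_add_add_sq_div_two_mul_le (sqrt_pos.2 hu) (sqrt_pos.2 hP1) hcs
end

section
/- Let P > 0 and S ≥ 0 be real, and define g(α) = (1/2)·ln(1 + αP/(2 + (1−α)P + 2S)) + (1/4)·ln(1 + (1−α)P/2) for α ∈ [0,1]. Set α* = min{1, max{0, (P+2−2S)/P}}. Then g(α) ≤ g(α*) for every α ∈ [0,1]. -/
/-!
With `u = 2 + (1 - α) P ∈ [2, 2 + P]`, the rate equals `¼ · log (C · u / (u + 2S)²)` for a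
constant `C > 0`. The map `u ↦ u / (u + c)²` increases up to `u = c` and decreases afterwards,
so on `[2, 2 + P]` it peaks at the clamp of `2S` to that interval, which is `2 + (1 - α*) P`.
-/

open Real Set

theorem isMaxOn_div_add_sq {a b c : ℝ} (ha : 0 < a) (hc : 0 ≤ c) :
    IsMaxOn (fun u => u / (u + c) ^ 2) (Icc a b) (max a (min b c)) := by
  intro u ⟨hau, hub⟩
  set v := max a (min b c)
  have hv : a ≤ v := le_max_left _ _
  show u / (u + c) ^ 2 ≤ v / (v + c) ^ 2
  rw [div_le_div_iff₀ (by nlinarith) (by nlinarith)]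
  -- `v (u + c)² - u (v + c)² = (u - v)(u v - c²)`
  suffices 0 ≤ (u - v) * (u * v - c ^ 2) by nlinarith
  rcases le_total c a with hca | hac
  · have : v = a := max_eq_left ((min_le_right _ _).trans hca)
    rw [this]
    exact mul_nonneg (by linarith) (by nlinarith)
  rcases le_total b c with hbc | hcb
  · have : v = b := by simp only [v, min_eq_left hbc, max_eq_right (hau.trans hub)]
    rw [this]
    exact mul_nonneg_of_nonpos_of_nonpos (by linarith) (by nlinarith)
  · have : v = c := by simp only [v, min_eq_right hcb, max_eq_right hac]
    rw [this]
    nlinarith [sq_nonneg (u - c)]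

noncomputable def imagRate (P S α : ℝ) : ℝ :=
  (1 / 2) * log (1 + α * P / (2 + (1 - α) * P + 2 * S)) + (1 / 4) * log (1 + (1 - α) * P / 2)

theorem imagRate_eq_log {P S α : ℝ} (hP : 0 ≤ P) (hS : 0 ≤ S) (hα : α ∈ Icc (0 : ℝ) 1) :
    imagRate P S α = (1 / 4) * log ((2 + P + 2 * S) ^ 2 / 2 *
      ((2 + (1 - α) * P) / (2 + (1 - α) * P + 2 * S) ^ 2)) := by
  obtain ⟨hα0, hα1⟩ := hα
  have hu : 2 ≤ 2 + (1 - α) * P := by nlinarith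
  have hD : 0 < 2 + (1 - α) * P + 2 * S := by linarith
  have hfirst : 1 + α * P / (2 + (1 - α) * P + 2 * S)
      = (2 + P + 2 * S) / (2 + (1 - α) * P + 2 * S) := by
    field_simp; ring
  have hsecond : 1 + (1 - α) * P / 2 = (2 + (1 - α) * P) / 2 := by ring
  have hprod : (2 + P + 2 * S) ^ 2 / 2 * ((2 + (1 - α) * P) / (2 + (1 - α) * P + 2 * S) ^ 2)
      = ((2 + P + 2 * S) / (2 + (1 - α) * P + 2 * S)) ^ 2 * ((2 + (1 - α) * P) / 2) := by
    field_simp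
  rw [imagRate, hfirst, hsecond, hprod, log_mul (by positivity) (by positivity), log_pow]
  push_cast
  ring

theorem two_add_one_sub_clamp_mul {P S : ℝ} (hP : 0 < P) :
    2 + (1 - min 1 (max 0 ((P + 2 - 2 * S) / P))) * P = max 2 (min (2 + P) (2 * S)) := by
  rw [sub_mul, one_mul, min_mul_of_nonneg _ _ hP.le, max_mul_of_nonneg _ _ hP.le, zero_mul,
    one_mul, div_mul_cancel₀ _ hP.ne']
  simp only [min_def, max_def]
  split_ifs <;> linarith

/-- Optimization over the power-split parameter `α` in Lemma 4: the function
`g(α) = (1/2)·ln(1 + αP/(2+(1−α)P+2S)) + (1/4)·ln(1+(1−α)P/2)` on `[0,1]` is maximized at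
`α* = min{1, max{0, (P+2−2S)/P}}`. -/
theorem stmt_16 (P S : ℝ) (hP : 0 < P) (hS : 0 ≤ S) :
    ∀ α ∈ Set.Icc (0 : ℝ) 1,
      (1 / 2) * Real.log (1 + α * P / (2 + (1 - α) * P + 2 * S))
          + (1 / 4) * Real.log (1 + (1 - α) * P / 2)
      ≤ (1 / 2) * Real.log (1 + (min 1 (max 0 ((P + 2 - 2 * S) / P))) * P
              / (2 + (1 - min 1 (max 0 ((P + 2 - 2 * S) / P))) * P + 2 * S))
          + (1 / 4) * Real.log (1 + (1 - min 1 (max 0 ((P + 2 - 2 * S) / P))) * P / 2) := by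
  intro α hα
  set αs := min 1 (max 0 ((P + 2 - 2 * S) / P)) with hαs
  have hαs_mem : αs ∈ Icc (0 : ℝ) 1 := ⟨le_min zero_le_one (le_max_left _ _), min_le_left _ _⟩
  have hu : 2 + (1 - α) * P ∈ Icc 2 (2 + P) := ⟨by nlinarith [hα.2], by nlinarith [hα.1]⟩
  have hmax := isMaxOn_div_add_sq two_pos (by positivity : (0 : ℝ) ≤ 2 * S) hu
  rw [← two_add_one_sub_clamp_mul hP, ← hαs] at hmax
  change imagRate P S α ≤ imagRate P S αs
  rw [imagRate_eq_log hP.le hS hα, imagRate_eq_log hP.le hS hαs_mem]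
  have hu0 : 0 < 2 + (1 - α) * P := two_pos.trans_le hu.1
  gcongr (1 / 4) * ?_
  exact log_le_log (by positivity) (mul_le_mul_of_nonneg_left hmax (by positivity))
end
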